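/- Let N = 2M ≥ 8 be an even integer. Every element of G can be written uniquely as r^i ∘ s^j ∘ c^k with i ∈ {0, …, N−1} and j, k ∈ {0, 1}. For ℓ ∈ {1, …, M−1} and τ ∈ {−1, +1}, define χ_{ℓ,τ} : G → ℝ by χ_{ℓ,τ}(r^i s^j c^k) = 2 cos(2iℓπ/N) · τ^k if j = 0 and χ_{ℓ,τ}(r^i s^j c^k) = 0 if j = 1. Then: (i) Σ_{h ∈ {id, r^M s, r^M c, s c}} χ_{ℓ,τ}(h) = 2(1 + τ(−1)^ℓ), which is nonzero if and only if (τ = +1 and ℓ is even) or (τ = −1 and ℓ is odd); (ii) Σ_{h ∈ {id, r^{M−1} s}} χ_{ℓ,τ}(h) = 2 ≠ 0. -/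

import Mathlib

/-!
Every generator acts on `ℝ^N` as a signed permutation of coordinates, so for `j < 2` a word
`rⁱ sʲ cᵏ` sends `x` to `a ↦ (-1)ᵏ x((-1)ʲ (a + i) - j)`. The relations `s rⁱ = r⁻ⁱ s` and the
centrality of `c` bring every element of `G` to this form. Testing the action on standard basis
vectors recovers `k` from the sign and `(j, i)` from the index map; telling `j = 0` from `j = 1`
needs `1 ≠ -1` in `ℤ/N`, i.e. `N > 2`. The character sums are then values of `χ` on normal
forms, with `cos (2Mℓπ / 2M) = (-1)^ℓ`.
-/

/-- The cyclic shift `(r x)ᵢ = x_{i+1}` as a linear automorphism of `ℝ^N`. -/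
noncomputable def rmap (N : ℕ) [NeZero N] : (Fin N → ℝ) ≃ₗ[ℝ] (Fin N → ℝ) :=
  LinearEquiv.funCongrLeft ℝ ℝ (Equiv.addRight (1 : Fin N))

/-- The reflection `(s x)ᵢ = x_{N+1-i}` as a linear automorphism of `ℝ^N`. -/
noncomputable def smap (N : ℕ) [NeZero N] : (Fin N → ℝ) ≃ₗ[ℝ] (Fin N → ℝ) :=
  LinearEquiv.funCongrLeft ℝ ℝ ((Equiv.neg (Fin N)).trans (Equiv.subRight (1 : Fin N)))

/-- The spin flip `(c x)ᵢ = -xᵢ` as a linear automorphism of `ℝ^N`. -/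
noncomputable def cmap (N : ℕ) : (Fin N → ℝ) ≃ₗ[ℝ] (Fin N → ℝ) :=
  LinearEquiv.neg ℝ

/-- The symmetry group `G ≅ D_N × ℤ₂` generated by `r`, `s` and `c`. -/
noncomputable def Gsym (N : ℕ) [NeZero N] : Subgroup ((Fin N → ℝ) ≃ₗ[ℝ] (Fin N → ℝ)) :=
  Subgroup.closure {rmap N, smap N, cmap N}


open Fin.NatCast Fin.CommRing

lemma eq_and_eq_of_forall_mul_apply_eq {ι R : Type*} [DecidableEq ι] [MulZeroOneClass R]
    {ε ε' : R} (hε : ε ≠ 0) {σ σ' : ι → ι}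
    (h : ∀ (x : ι → R) (a : ι), ε * x (σ a) = ε' * x (σ' a)) (a : ι) :
    σ a = σ' a ∧ ε = ε' := by
  have hsingle := h (Pi.single (σ a) 1) a
  rw [Pi.single_eq_same, mul_one] at hsingle
  by_cases hσ : σ' a = σ a
  · rw [hσ, Pi.single_eq_same, mul_one] at hsingle
    exact ⟨hσ.symm, hsingle⟩
  · rw [Pi.single_eq_of_ne hσ, mul_zero] at hsingle
    exact absurd hsingle hε

variable {N : ℕ}

lemma cmap_pow_apply (k : ℕ) (x : Fin N → ℝ) (a : Fin N) :
    (cmap N ^ k) x a = (-1) ^ k * x a := by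
  induction k generalizing x with
  | zero => simp
  | succ n ih => rw [pow_succ, LinearEquiv.mul_apply, ih, pow_succ]; simp [cmap]

lemma cmap_mul_self : cmap N * cmap N = 1 :=
  LinearEquiv.ext fun x => by simp [cmap]

lemma commute_cmap (f : (Fin N → ℝ) ≃ₗ[ℝ] (Fin N → ℝ)) : Commute (cmap N) f :=
  LinearEquiv.ext fun x => by simp [cmap]

variable [NeZero N]

lemma rmap_pow_apply (i : ℕ) (x : Fin N → ℝ) (a : Fin N) : (rmap N ^ i) x a = x (a + i) := by
  induction i generalizing x with
  | zero => simp
  | succ n ih =>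
    rw [pow_succ, LinearEquiv.mul_apply, ih]
    simp [rmap, LinearEquiv.funCongrLeft_apply, add_assoc]

lemma smap_apply (x : Fin N → ℝ) (a : Fin N) : smap N x a = x (-a - 1) := by
  simp [smap, LinearEquiv.funCongrLeft_apply]

lemma rmap_pow_card : rmap N ^ N = 1 :=
  LinearEquiv.ext fun x => funext fun a => by simp [rmap_pow_apply]

lemma smap_mul_self : smap N * smap N = 1 :=
  LinearEquiv.ext fun x => funext fun a => by simp [smap_apply]

lemma smap_mul_rmap_pow (i : ℕ) : smap N * rmap N ^ i = rmap N ^ (i * (N - 1)) * smap N := by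
  refine LinearEquiv.ext fun x => funext fun a => ?_
  simp only [LinearEquiv.mul_apply, smap_apply, rmap_pow_apply]
  congr 1
  push_cast [Nat.cast_sub NeZero.one_le, Fin.natCast_self]
  ring

section Words

local notation "word" i:max j:max k:max => rmap N ^ i * smap N ^ j * cmap N ^ k

lemma exists_eq_word_of_mem_Gsym {g : (Fin N → ℝ) ≃ₗ[ℝ] (Fin N → ℝ)} (hg : g ∈ Gsym N) :
    ∃ i j k : ℕ, g = word i j k := by
  have hr (i j k : ℕ) : rmap N ^ (N - 1) * word i j k = word (N - 1 + i) j k := by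
    simp only [pow_add, mul_assoc]
  have hs (i j k : ℕ) : smap N * word i j k = word (i * (N - 1)) (j + 1) k := by
    rw [← mul_assoc, ← mul_assoc, smap_mul_rmap_pow, pow_succ']
    simp only [mul_assoc]
  have hc (i j k : ℕ) : cmap N * word i j k = word i j (k + 1) := by
    rw [← mul_assoc, (commute_cmap _).eq, mul_assoc, pow_succ']
  have hr_inv : (rmap N)⁻¹ = rmap N ^ (N - 1) := by
    rw [inv_eq_iff_mul_eq_one, ← pow_succ', Nat.sub_add_cancel NeZero.one_le, rmap_pow_card]
  induction hg using Subgroup.closure_induction_left with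
  | one => exact ⟨0, 0, 0, by simp⟩
  | mul_left x hx y _ ih =>
    obtain ⟨i, j, k, rfl⟩ := ih
    rcases hx with rfl | rfl | rfl
    · exact ⟨i + 1, j, k, by simp only [pow_succ', mul_assoc]⟩
    · exact ⟨_, _, _, hs i j k⟩
    · exact ⟨_, _, _, hc i j k⟩
  | inv_mul_cancel x hx y _ ih =>
    obtain ⟨i, j, k, rfl⟩ := ih
    rcases hx with rfl | rfl | rfl
    · exact ⟨_, _, _, by rw [hr_inv, hr]⟩
    · exact ⟨_, _, _, by rw [inv_eq_of_mul_eq_one_right smap_mul_self, hs]⟩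
    · exact ⟨_, _, _, by rw [inv_eq_of_mul_eq_one_right cmap_mul_self, hc]⟩

lemma word_apply (i k : ℕ) {j : ℕ} (hj : j < 2) (x : Fin N → ℝ) (a : Fin N) :
    (word i j k) x a = (-1) ^ k * x ((-1) ^ j * (a + i) - j) := by
  interval_cases j <;> simp [rmap_pow_apply, smap_apply, cmap_pow_apply, sub_eq_add_neg]

lemma eq_of_word_eq_word (hN : 2 < N) {i j k i' j' k' : ℕ}
    (hi : i < N) (hj : j < 2) (hk : k < 2) (hi' : i' < N) (hj' : j' < 2) (hk' : k' < 2)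
    (h : word i j k = word i' j' k') :
    i = i' ∧ j = j' ∧ k = k' := by
  have hact (a : Fin N) := eq_and_eq_of_forall_mul_apply_eq
    (σ := fun a : Fin N => (-1) ^ j * (a + i) - j)
    (σ' := fun a : Fin N => (-1) ^ j' * (a + i') - j')
    (pow_ne_zero k (neg_ne_zero.2 (one_ne_zero (α := ℝ))))
    (fun x a => by rw [← word_apply i k hj, ← word_apply i' k' hj', h]) a
  obtain ⟨h0, hsign⟩ := hact 0
  obtain ⟨h1, -⟩ := hact 1
  have hk_eq : k = k' := by
    interval_cases k <;> interval_cases k' <;> first | rfl | norm_num at hsign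
  have hj_sign : (-1 : Fin N) ^ j = (-1) ^ j' := by linear_combination h1 - h0
  have hj_eq : j = j' := by
    have htwo : ((2 : ℕ) : Fin N) ≠ 0 := by
      rw [Ne, Fin.natCast_eq_zero]
      exact fun hdvd => absurd (Nat.le_of_dvd two_pos hdvd) hN.not_ge
    interval_cases j <;> interval_cases j' <;> first
      | rfl
      | exact absurd (by push_cast; linear_combination hj_sign) htwo
      | exact absurd (by push_cast; linear_combination -hj_sign) htwo
  subst hj_eq
  have hi_cast : (i : Fin N) = i' := by
    interval_cases j
    · linear_combination h0
    · linear_combination -h0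
  refine ⟨?_, rfl, hk_eq⟩
  simpa [Fin.val_cast_of_lt hi, Fin.val_cast_of_lt hi'] using congrArg Fin.val hi_cast

lemma existsUnique_word_of_mem_Gsym (hN : 2 < N) :
    ∀ g ∈ Gsym N, ∃! t : ℕ × ℕ × ℕ, t.1 < N ∧ t.2.1 < 2 ∧ t.2.2 < 2 ∧
      g = rmap N ^ t.1 * smap N ^ t.2.1 * cmap N ^ t.2.2 := by
  intro g hg
  obtain ⟨i, j, k, rfl⟩ := exists_eq_word_of_mem_Gsym hg
  have hreduce : word i j k = word (i % N) (j % 2) (k % 2) := by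
    rw [← pow_eq_pow_mod i rmap_pow_card, ← pow_eq_pow_mod j ((sq _).trans smap_mul_self),
      ← pow_eq_pow_mod k ((sq _).trans cmap_mul_self)]
  refine ⟨(i % N, j % 2, k % 2), ⟨Nat.mod_lt _ (NeZero.pos N), Nat.mod_lt _ two_pos,
    Nat.mod_lt _ two_pos, hreduce⟩, ?_⟩
  rintro ⟨i', j', k'⟩ ⟨hi', hj', hk', h⟩
  obtain ⟨rfl, rfl, rfl⟩ := eq_of_word_eq_word hN hi' hj' hk' (Nat.mod_lt _ (NeZero.pos N))
    (Nat.mod_lt _ two_pos) (Nat.mod_lt _ two_pos) (h.symm.trans hreduce)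
  rfl

end Words

lemma one_add_mul_neg_one_pow_ne_zero_iff {τ : ℝ} (hτ : τ = 1 ∨ τ = -1) (ℓ : ℕ) :
    1 + τ * (-1) ^ ℓ ≠ 0 ↔ (τ = 1 ∧ Even ℓ) ∨ (τ = -1 ∧ Odd ℓ) := by
  rcases hτ with rfl | rfl <;> rcases Nat.even_or_odd ℓ with hℓ | hℓ <;>
    simp [hℓ.neg_one_pow, hℓ, Nat.not_even_iff_odd, Nat.not_odd_iff_even] <;> norm_num

theorem stmt_17_general (N M : ℕ) (hNM : N = 2 * M) (hM : 4 ≤ M) [NeZero N]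
    (hr : rmap N ∈ Gsym N) (hs : smap N ∈ Gsym N) (hc : cmap N ∈ Gsym N)
    (ℓ : ℕ) (τ : ℝ) (hτ : τ = 1 ∨ τ = -1)
    (χ : Gsym N → ℝ)
    (hχ : ∀ (i j k : ℕ), j < 2 → k < 2 →
      χ ((⟨rmap N, hr⟩ : Gsym N) ^ i * (⟨smap N, hs⟩ : Gsym N) ^ j
          * (⟨cmap N, hc⟩ : Gsym N) ^ k) =
        if j = 0 then 2 * Real.cos (2 * (i : ℝ) * (ℓ : ℝ) * Real.pi / (N : ℝ)) * τ ^ k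
        else 0) :
    (∀ g ∈ Gsym N, ∃! t : ℕ × ℕ × ℕ, t.1 < N ∧ t.2.1 < 2 ∧ t.2.2 < 2 ∧
      g = rmap N ^ t.1 * smap N ^ t.2.1 * cmap N ^ t.2.2) ∧
    (χ 1 + χ ((⟨rmap N, hr⟩ : Gsym N) ^ M * ⟨smap N, hs⟩)
        + χ ((⟨rmap N, hr⟩ : Gsym N) ^ M * ⟨cmap N, hc⟩)
        + χ ((⟨smap N, hs⟩ : Gsym N) * ⟨cmap N, hc⟩)
        = 2 * (1 + τ * (-1) ^ ℓ) ∧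
      (2 * (1 + τ * (-1 : ℝ) ^ ℓ) ≠ 0 ↔ ((τ = 1 ∧ Even ℓ) ∨ (τ = -1 ∧ Odd ℓ)))) ∧
    (χ 1 + χ ((⟨rmap N, hr⟩ : Gsym N) ^ (M - 1) * ⟨smap N, hs⟩) = 2) := by
  have h1 : χ 1 = 2 := by simpa using hχ 0 0 0 two_pos two_pos
  have hrs (i : ℕ) : χ ((⟨rmap N, hr⟩ : Gsym N) ^ i * ⟨smap N, hs⟩) = 0 := by
    simpa using hχ i 1 0 one_lt_two two_pos
  have hsc : χ ((⟨smap N, hs⟩ : Gsym N) * ⟨cmap N, hc⟩) = 0 := by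
    simpa using hχ 0 1 1 one_lt_two one_lt_two
  have hrc : χ ((⟨rmap N, hr⟩ : Gsym N) ^ M * ⟨cmap N, hc⟩) = 2 * (-1) ^ ℓ * τ := by
    have hangle : 2 * (M : ℝ) * ℓ * Real.pi / N = ℓ * Real.pi := by
      have hM0 : (M : ℝ) ≠ 0 := Nat.cast_ne_zero.2 (by omega)
      rw [hNM]
      field_simp
      push_cast
      ring
    simpa [hangle, Real.cos_nat_mul_pi] using hχ M 0 1 two_pos one_lt_two
  refine ⟨existsUnique_word_of_mem_Gsym (by omega), ⟨?_, ?_⟩, by rw [h1, hrs, add_zero]⟩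
  · rw [h1, hrs, hrc, hsc]
    ring
  · exact (mul_ne_zero_iff_left two_ne_zero).trans (one_add_mul_neg_one_pow_ne_zero_iff hτ ℓ)

/-- Unique decomposition `g = rⁱ sʲ cᵏ` of the elements of `G`, and
stabiliser sums of the characters `χ_{ℓ,τ}` of the two-dimensional irreducible
representations of `G` over the stabilisers of the orbits `A₂` and `O_y`. -/
theorem stmt_17 (N M : ℕ) (hNM : N = 2 * M) (hM : 4 ≤ M) [NeZero N]
    (hr : rmap N ∈ Gsym N) (hs : smap N ∈ Gsym N) (hc : cmap N ∈ Gsym N)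
    (ℓ : ℕ) (hℓ1 : 1 ≤ ℓ) (hℓ2 : ℓ ≤ M - 1) (τ : ℝ) (hτ : τ = 1 ∨ τ = -1)
    (χ : Gsym N → ℝ)
    (hχ : ∀ (i j k : ℕ), j < 2 → k < 2 →
      χ ((⟨rmap N, hr⟩ : Gsym N) ^ i * (⟨smap N, hs⟩ : Gsym N) ^ j
          * (⟨cmap N, hc⟩ : Gsym N) ^ k) =
        if j = 0 then 2 * Real.cos (2 * (i : ℝ) * (ℓ : ℝ) * Real.pi / (N : ℝ)) * τ ^ k
        else 0) :
    (∀ g ∈ Gsym N, ∃! t : ℕ × ℕ × ℕ, t.1 < N ∧ t.2.1 < 2 ∧ t.2.2 < 2 ∧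
      g = rmap N ^ t.1 * smap N ^ t.2.1 * cmap N ^ t.2.2) ∧
    (χ 1 + χ ((⟨rmap N, hr⟩ : Gsym N) ^ M * ⟨smap N, hs⟩)
        + χ ((⟨rmap N, hr⟩ : Gsym N) ^ M * ⟨cmap N, hc⟩)
        + χ ((⟨smap N, hs⟩ : Gsym N) * ⟨cmap N, hc⟩)
        = 2 * (1 + τ * (-1) ^ ℓ) ∧
      (2 * (1 + τ * (-1 : ℝ) ^ ℓ) ≠ 0 ↔ ((τ = 1 ∧ Even ℓ) ∨ (τ = -1 ∧ Odd ℓ)))) ∧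
    (χ 1 + χ ((⟨rmap N, hr⟩ : Gsym N) ^ (M - 1) * ⟨smap N, hs⟩) = 2) :=
  stmt_17_general N M hNM hM hr hs hc ℓ τ hτ χ hχ
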